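/- If u solves the linear Schrödinger equation, then the quantity Lu(t) = x u(t) + 2it ∂ₓu(t) has conserved L² norm: ‖Lu(t)‖_{L²} = ‖x u₀‖_{L²} for all t. -/

import Mathlib

/-!
Expanding `(x - y)²` in the kernel factorises the flow as `u(t) = M D 𝓕 M u₀`, where `M` is
multiplication by the unimodular chirp `e^{ix²/(4t)}`, `𝓕` the Fourier transform and `D` the
`L²`-normalised dilation `F ↦ (4πit)^{-1/2} F(· / (4πt))`. Conjugating by `M` turns
`L = x + 2it∂ₓ` into `2it∂ₓ`, which `D 𝓕` intertwines with multiplication by `y`; hence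
`L u(t) = M D 𝓕 M (x u₀)`. Since `M` and `D 𝓕` preserve the `L²` norm (Plancherel), so does
the whole product, and `‖M (x u₀)‖ = ‖x u₀‖`.
-/

open Complex MeasureTheory

open scoped FourierTransform Real

noncomputable def schrodingerKernel (t x : ℝ) : ℂ :=
  (4 * Real.pi * I * (t : ℂ)) ^ (-(1 / 2 : ℂ)) * Complex.exp (I * (x : ℂ) ^ 2 / (4 * (t : ℂ)))

noncomputable def schrodingerEvolution (u₀ : ℝ → ℂ) (t x : ℝ) : ℂ :=
  ∫ y : ℝ, schrodingerKernel t (x - y) * u₀ y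

noncomputable def chirp (a : ℂ) (x : ℝ) : ℂ := cexp (a * (x : ℂ) ^ 2)

lemma norm_chirp {a : ℂ} (ha : a.re = 0) (x : ℝ) : ‖chirp a x‖ = 1 := by
  rw [chirp, norm_exp, ← ofReal_pow, re_mul_ofReal, ha, zero_mul, Real.exp_zero]

lemma hasDerivAt_chirp (a : ℂ) (x : ℝ) : HasDerivAt (chirp a) (2 * a * x * chirp a x) x := by
  have h := ((hasDerivAt_pow 2 (x : ℂ)).const_mul a).cexp.comp_ofReal
  unfold chirp
  convert h using 1
  push_cast
  ring

lemma iteratedDeriv_cexp_const_mul_ofReal (c : ℂ) (n : ℕ) :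
    iteratedDeriv n (fun s : ℝ => cexp (c * s)) = fun s : ℝ => c ^ n * cexp (c * s) := by
  induction n with
  | zero => simp
  | succ n ih =>
    funext s
    rw [iteratedDeriv_succ, ih]
    have h := (((hasDerivAt_id' (s : ℂ)).const_mul c).cexp.const_mul (c ^ n)).comp_ofReal
    rw [h.deriv]
    ring

lemma hasTemperateGrowth_cexp_const_mul_ofReal {c : ℂ} (hc : c.re = 0) :
    (fun s : ℝ => cexp (c * s)).HasTemperateGrowth := by
  refine ⟨contDiff_exp.comp (contDiff_const.mul ofRealCLM.contDiff),
    fun n => ⟨0, ‖c‖ ^ n, fun s => ?_⟩⟩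
  rw [norm_iteratedFDeriv_eq_norm_iteratedDeriv, iteratedDeriv_cexp_const_mul_ofReal]
  simp [norm_exp, hc]

lemma hasTemperateGrowth_chirp {a : ℂ} (ha : a.re = 0) : (chirp a).HasTemperateGrowth := by
  have : chirp a = (fun s : ℝ => cexp (a * s)) ∘ fun x => x ^ 2 := by
    funext x; simp [chirp]
  rw [this]
  exact (hasTemperateGrowth_cexp_const_mul_ofReal ha).comp (by fun_prop)

lemma norm_cpow_neg_half_sq (z : ℂ) : ‖z ^ (-(1 / 2) : ℂ)‖ ^ 2 = ‖z‖⁻¹ := by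
  rw [show (-(1 / 2) : ℂ) = ((-(1 / 2) : ℝ) : ℂ) by push_cast; ring, norm_cpow_real,
    ← Real.rpow_natCast, ← Real.rpow_mul (norm_nonneg z)]
  norm_num [Real.rpow_neg_one]

lemma hasDerivAt_fourier_of_integrable {f : ℝ → ℂ} (hf : Integrable f)
    (hxf : Integrable fun y : ℝ => (y : ℂ) * f y) (w : ℝ) :
    HasDerivAt (𝓕 f) (-2 * π * I * 𝓕 (fun y : ℝ => (y : ℂ) * f y) w) w := by
  refine (Real.hasDerivAt_fourier hf (by simpa only [real_smul] using hxf) w).congr_deriv ?_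
  rw [Real.fourier_real_eq, Real.fourier_real_eq, ← integral_const_mul]
  congr 1 with y
  simp only [Circle.smul_def, smul_eq_mul]
  ring

noncomputable def galileanOperator (t : ℝ) (u : ℝ → ℂ) (x : ℝ) : ℂ :=
  x * u x + 2 * I * t * deriv u x

noncomputable def modulatedDilatedFourier (t : ℝ) (f : ℝ → ℂ) (x : ℝ) : ℂ :=
  (4 * π * I * t) ^ (-(1 / 2 : ℂ)) * chirp (I / (4 * t)) x * 𝓕 f (x / (4 * π * t))

lemma schrodingerEvolution_eq_modulatedDilatedFourier (u₀ : ℝ → ℂ) (t : ℝ) :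
    schrodingerEvolution u₀ t =
      modulatedDilatedFourier t (fun y => chirp (I / (4 * t)) y * u₀ y) := by
  ext x
  rw [modulatedDilatedFourier, Real.fourier_real_eq_integral_exp_smul, schrodingerEvolution,
    ← integral_const_mul]
  congr 1 with y
  have hexp : I * ((x - y : ℝ) : ℂ) ^ 2 / (4 * t) = I / (4 * t) * x ^ 2 +
      (↑(-2 * π * y * (x / (4 * π * t))) * I + I / (4 * t) * y ^ 2) := by
    push_cast
    field_simp
    ring
  rw [schrodingerKernel, hexp, exp_add, exp_add, smul_eq_mul, chirp, chirp]
  ring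

lemma galileanOperator_modulatedDilatedFourier {f : ℝ → ℂ} (hf : Integrable f)
    (hxf : Integrable fun y : ℝ => (y : ℂ) * f y) {t : ℝ} (ht : t ≠ 0) :
    galileanOperator t (modulatedDilatedFourier t f) =
      modulatedDilatedFourier t (fun y : ℝ => (y : ℂ) * f y) := by
  ext x
  have hw : HasDerivAt (fun x : ℝ => x / (4 * π * t)) (1 / (4 * π * t)) x := by
    simpa using (hasDerivAt_id x).div_const (4 * π * t)
  have hF : HasDerivAt (modulatedDilatedFourier t f) _ x :=
    ((hasDerivAt_chirp (I / (4 * t)) x).const_mul _).fun_mul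
    ((hasDerivAt_fourier_of_integrable hf hxf _).scomp x hw)
  rw [galileanOperator, hF.deriv, modulatedDilatedFourier, modulatedDilatedFourier, real_smul]
  generalize 𝓕 f (x / (4 * π * t)) = F₀
  generalize 𝓕 (fun y : ℝ => (y : ℂ) * f y) (x / (4 * π * t)) = F₁
  have htC : (t : ℂ) ≠ 0 := ofReal_ne_zero.mpr ht
  have hπ : (π : ℂ) ≠ 0 := ofReal_ne_zero.mpr Real.pi_ne_zero
  push_cast
  field_simp
  ring_nf
  rw [I_sq]
  ring

lemma integral_norm_sq_modulatedDilatedFourier (g : SchwartzMap ℝ ℂ) {t : ℝ} (ht : t ≠ 0) :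
    ∫ x, ‖modulatedDilatedFourier t g x‖ ^ 2 = ∫ x, ‖g x‖ ^ 2 := by
  have hc : ‖(4 * π * I * t : ℂ) ^ (-(1 / 2 : ℂ))‖ ^ 2 * |4 * π * t| = 1 := by
    have h4πt : ‖(4 * π * I * t : ℂ)‖ = |4 * π * t| := by
      simp [abs_mul, abs_of_pos Real.pi_pos]
    rw [norm_cpow_neg_half_sq, h4πt, inv_mul_cancel₀ (by positivity)]
  simp only [modulatedDilatedFourier, norm_mul, norm_chirp (a := I / (4 * t)) (by simp [div_re]),
    mul_one, mul_pow]
  rw [integral_const_mul, Measure.integral_comp_div (fun ξ => ‖𝓕 (g : ℝ → ℂ) ξ‖ ^ 2),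
    ← SchwartzMap.fourier_coe, SchwartzMap.integral_norm_sq_fourier, smul_eq_mul, ← mul_assoc,
    hc, one_mul]

theorem Lu_L2_conserved (u₀ : SchwartzMap ℝ ℂ) (t : ℝ) (ht : t ≠ 0) :
    (∫ x : ℝ, ‖(x : ℂ) * schrodingerEvolution (fun y => u₀ y) t x +
        2 * I * (t : ℂ) * deriv (fun y : ℝ => schrodingerEvolution (fun z => u₀ z) t y) x‖ ^ 2) =
      ∫ x : ℝ, ‖(x : ℂ) * u₀ x‖ ^ 2 := by
  have ha : (I / (4 * t)).re = 0 := by simp [div_re]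
  set h : SchwartzMap ℝ ℂ := SchwartzMap.smulLeftCLM ℂ (chirp (I / (4 * t))) u₀
  set g : SchwartzMap ℝ ℂ := SchwartzMap.smulLeftCLM ℂ (fun y : ℝ => (y : ℂ)) h
  have hh : (h : ℝ → ℂ) = fun y => chirp (I / (4 * t)) y * u₀ y :=
    SchwartzMap.smulLeftCLM_apply (hasTemperateGrowth_chirp ha) u₀
  have hg : (g : ℝ → ℂ) = fun y : ℝ => (y : ℂ) * h y :=
    SchwartzMap.smulLeftCLM_apply ofRealCLM.hasTemperateGrowth h
  have hu : schrodingerEvolution (fun y => u₀ y) t = modulatedDilatedFourier t h := by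
    rw [hh]
    exact schrodingerEvolution_eq_modulatedDilatedFourier _ t
  calc _ = ∫ x, ‖galileanOperator t (modulatedDilatedFourier t h) x‖ ^ 2 := by
        rw [← hu]; rfl
    _ = ∫ x, ‖modulatedDilatedFourier t g x‖ ^ 2 := by
        rw [galileanOperator_modulatedDilatedFourier h.integrable (hg ▸ g.integrable) ht, hg]
    _ = ∫ x, ‖g x‖ ^ 2 := integral_norm_sq_modulatedDilatedFourier g ht
    _ = _ := by simp only [hg, hh, norm_mul, norm_chirp ha, one_mul]
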